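/- Let p ≥ 3, q ≥ 2, let G = N(p,q) be the free nilpotent group of class p and rank q with generators a_1,…,a_q, write a = a_1, b = a_2, and let R be the left-nested iterated commutator ⁅a, b, b, …, b⁆ with p − 2 entries in total (so R = a when p = 3). Suppose y ∈ G can be written as y = a^A · b^B · a_3^{C_3} ⋯ a_q^{C_q} · h with h in the commutator subgroup ⁅G,G⁆ (equivalently, the image of y in the abelianization of G is A·ā_1 + B·ā_2 + ∑_{l=3}^{q} C_l·ā_l). Then ⁅R, b, y⁆ = ⁅R, b, a⁆^A · ⁅R, b, b⁆^B · ∏_{l=3}^{q} ⁅R, b, a_l⁆^{C_l}, where all factors lie in the central subgroup lowerCentralSeries G (p−1), so the order of the product is immaterial. -/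

import Mathlib

open scoped commutatorElement

/-- The free nilpotent group `N(p,q)` of class `p` and rank `q`: the quotient of the free
group on `q` generators by the `p`-th term of its lower central series. -/
def FreeNilpotent (p q : ℕ) : Type :=
  FreeGroup (Fin q) ⧸ (⊤ : Subgroup (FreeGroup (Fin q))).lowerCentralSeries p

instance (p q : ℕ) : Group (FreeNilpotent p q) :=
  QuotientGroup.Quotient.group _

/-- The images `a_1, …, a_q` in `N(p,q)` of the free generators `e_1, …, e_q`. -/
def FreeNilpotent.gen (p q : ℕ) (i : Fin q) : FreeNilpotent p q :=
  QuotientGroup.mk (FreeGroup.of i)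

/-- The left-nested iterated commutator `⁅x₁, …, xₙ⁆ = ⁅⁅…⁅⁅x₁,x₂⁆,x₃⁆,…⁆,xₙ⁆` of a list of
group elements (by convention `1` for the empty list, and `x` for the singleton list `[x]`). -/
def nestedCommutator {G : Type*} [Group G] : List G → G
  | [] => 1
  | x :: xs => xs.foldl (fun u v => ⁅u, v⁆) x



section Aux
variable {G H : Type*} [Group G] [Group H]

theorem lcs_le_map_of_surjective {f : G →* H} (hf : Function.Surjective f) (n : ℕ) :
    (⊤ : Subgroup H).lowerCentralSeries n ≤ Subgroup.map f ((⊤ : Subgroup G).lowerCentralSeries n) := by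
  induction n with
  | zero =>
    rw [Subgroup.lowerCentralSeries_zero, Subgroup.lowerCentralSeries_zero]
    intro x _
    obtain ⟨y, rfl⟩ := hf x
    exact Subgroup.mem_map_of_mem f (Subgroup.mem_top y)
  | succ n ih =>
    rw [Subgroup.lowerCentralSeries_succ, Subgroup.lowerCentralSeries_succ]
    have htop : (⊤ : Subgroup H) ≤ Subgroup.map f ⊤ := by
      intro x _; obtain ⟨y, rfl⟩ := hf x; exact Subgroup.mem_map_of_mem f (Subgroup.mem_top y)
    calc ⁅(⊤ : Subgroup H).lowerCentralSeries n, (⊤ : Subgroup H)⁆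
        ≤ ⁅Subgroup.map f ((⊤ : Subgroup G).lowerCentralSeries n), Subgroup.map f ⊤⁆ :=
          Subgroup.commutator_mono ih htop
      _ = Subgroup.map f ⁅(⊤ : Subgroup G).lowerCentralSeries n, ⊤⁆ :=
          (Subgroup.map_commutator _ _ f).symm

theorem freeNilpotent_lcs_eq_bot (p q : ℕ) :
    (⊤ : Subgroup (FreeNilpotent p q)).lowerCentralSeries p = ⊥ := by
  rw [eq_bot_iff]
  intro g hg
  have := lcs_le_map_of_surjective
    (QuotientGroup.mk'_surjective ((⊤ : Subgroup (FreeGroup (Fin q))).lowerCentralSeries p)) p hg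
  obtain ⟨x, hx, rfl⟩ := this
  show QuotientGroup.mk' _ x ∈ (⊥ : Subgroup (FreeNilpotent p q))
  refine Subgroup.mem_bot.mpr ?_
  exact (QuotientGroup.eq_one_iff x).mpr hx

theorem nestedCommutator_cons_mem {G : Type*} [Group G] (x : G) (l : List G) :
    nestedCommutator (x :: l) ∈ (⊤ : Subgroup G).lowerCentralSeries l.length := by
  induction l using List.reverseRecOn with
  | nil => simp [nestedCommutator]
  | append_singleton l v ih =>
    have : nestedCommutator (x :: (l ++ [v])) = ⁅nestedCommutator (x :: l), v⁆ := by
      simp [nestedCommutator]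
    rw [this, List.length_append, List.length_singleton, Subgroup.lowerCentralSeries_succ]
    exact Subgroup.commutator_mem_commutator ih (Subgroup.mem_top v)
end Aux

/-- In `N(p,q)` with `p ≥ 3`, `q ≥ 2`, write `a = a_1`, `b = a_2` and let `R = ⁅a,b,b,…,b⁆`
be the left-nested iterated commutator with `p - 2` entries in total (so `R = a` when
`p = 3`).  If `y = a^A * b^B * a_3^{C_3} ⋯ a_q^{C_q} * h` with `h` in the commutator
subgroup (the indices `l` with `2 ≤ l` below are exactly `a_3, …, a_q` in 0-based
indexing), then `⁅R,b,y⁆ = ⁅R,b,a⁆^A * ⁅R,b,b⁆^B * ∏_{l=3}^{q} ⁅R,b,a_l⁆^{C_l}`.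
(All factors lie in the central subgroup `lowerCentralSeries (N(p,q)) (p-1)`, so the order
of the product is immaterial; we fix the order given by increasing indices.) -/
theorem commutator_with_R_b_linear_free_nilpotent
    (p q : ℕ) (hp : 3 ≤ p) (hq : 2 ≤ q)
    (A B : ℤ) (C : Fin q → ℤ) (h y : FreeNilpotent p q)
    (hh : h ∈ commutator (FreeNilpotent p q))
    (hy : y = FreeNilpotent.gen p q ⟨0, by omega⟩ ^ A *
        FreeNilpotent.gen p q ⟨1, by omega⟩ ^ B *
        (List.ofFn fun l : Fin q =>
          if 2 ≤ (l : ℕ) then FreeNilpotent.gen p q l ^ C l else 1).prod * h) :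
    ⁅⁅nestedCommutator (FreeNilpotent.gen p q ⟨0, by omega⟩ ::
        List.replicate (p - 3) (FreeNilpotent.gen p q ⟨1, by omega⟩)),
      FreeNilpotent.gen p q ⟨1, by omega⟩⁆, y⁆ =
    ⁅⁅nestedCommutator (FreeNilpotent.gen p q ⟨0, by omega⟩ ::
        List.replicate (p - 3) (FreeNilpotent.gen p q ⟨1, by omega⟩)),
      FreeNilpotent.gen p q ⟨1, by omega⟩⁆, FreeNilpotent.gen p q ⟨0, by omega⟩⁆ ^ A *
    ⁅⁅nestedCommutator (FreeNilpotent.gen p q ⟨0, by omega⟩ ::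
        List.replicate (p - 3) (FreeNilpotent.gen p q ⟨1, by omega⟩)),
      FreeNilpotent.gen p q ⟨1, by omega⟩⁆, FreeNilpotent.gen p q ⟨1, by omega⟩⁆ ^ B *
    (List.ofFn fun l : Fin q =>
      if 2 ≤ (l : ℕ) then
        ⁅⁅nestedCommutator (FreeNilpotent.gen p q ⟨0, by omega⟩ ::
            List.replicate (p - 3) (FreeNilpotent.gen p q ⟨1, by omega⟩)),
          FreeNilpotent.gen p q ⟨1, by omega⟩⁆, FreeNilpotent.gen p q l⁆ ^ C l
      else 1).prod := by
  set a : FreeNilpotent p q := FreeNilpotent.gen p q ⟨0, by omega⟩ with ha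
  set b : FreeNilpotent p q := FreeNilpotent.gen p q ⟨1, by omega⟩ with hb
  set T : FreeNilpotent p q := ⁅nestedCommutator (a :: List.replicate (p - 3) b), b⁆ with hT
  have hTmem : T ∈ (⊤ : Subgroup (FreeNilpotent p q)).lowerCentralSeries (p - 2) := by
    have h1 : nestedCommutator (a :: List.replicate (p - 3) b) ∈
        (⊤ : Subgroup (FreeNilpotent p q)).lowerCentralSeries (p - 3) := by
      have := nestedCommutator_cons_mem a (List.replicate (p - 3) b)
      rwa [List.length_replicate] at this
    have h2 : p - 2 = (p - 3) + 1 := by omega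
    rw [h2, Subgroup.lowerCentralSeries_succ]
    exact Subgroup.commutator_mem_commutator h1 (Subgroup.mem_top b)
  have hcen : ∀ z x : FreeNilpotent p q, x * ⁅T, z⁆ * x⁻¹ = ⁅T, z⁆ := by
    intro z x
    have hz : ⁅T, z⁆ ∈ (⊤ : Subgroup (FreeNilpotent p q)).lowerCentralSeries (p - 1) := by
      have h2 : p - 1 = (p - 2) + 1 := by omega
      rw [h2, Subgroup.lowerCentralSeries_succ]
      exact Subgroup.commutator_mem_commutator hTmem (Subgroup.mem_top z)
    have hone : ⁅⁅T, z⁆, x⁆ = 1 := by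
      have h3 : ⁅⁅T, z⁆, x⁆ ∈ (⊤ : Subgroup (FreeNilpotent p q)).lowerCentralSeries ((p - 1) + 1) := by
        rw [Subgroup.lowerCentralSeries_succ]
        exact Subgroup.commutator_mem_commutator hz (Subgroup.mem_top x)
      rw [show (p - 1) + 1 = p from by omega, freeNilpotent_lcs_eq_bot, Subgroup.mem_bot] at h3
      exact h3
    have := commutatorElement_eq_one_iff_mul_comm.mp hone
    rw [← this]; group
  have key : ∀ x z : FreeNilpotent p q, ⁅T, x * z⁆ = ⁅T, x⁆ * ⁅T, z⁆ := by
    intro x z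
    have h1 : ⁅T, x * z⁆ = ⁅T, x⁆ * (x * ⁅T, z⁆ * x⁻¹) := by
      simp only [commutatorElement_def]; group
    rw [h1, hcen z x]
  set φ : FreeNilpotent p q →* FreeNilpotent p q := MonoidHom.mk' (fun z => ⁅T, z⁆) key with hφ
  have hker : ∀ g ∈ commutator (FreeNilpotent p q), φ g = 1 := by
    have hle : commutator (FreeNilpotent p q) ≤ φ.ker := by
      rw [commutator_def]
      refine Subgroup.commutator_le.mpr fun g _ k _ => ?_
      rw [MonoidHom.mem_ker, map_commutatorElement, commutatorElement_eq_one_iff_mul_comm]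
      exact mul_inv_eq_iff_eq_mul.mp (hcen k (φ g))
    exact fun g hg => hle hg
  show φ y = φ a ^ A * φ b ^ B *
      (List.ofFn fun l : Fin q =>
        if 2 ≤ (l : ℕ) then φ (FreeNilpotent.gen p q l) ^ C l else 1).prod
  rw [hy, map_mul, map_mul, map_mul, hker h hh, mul_one, map_zpow, map_zpow,
    map_list_prod, List.map_ofFn]
  have hfn : (⇑φ ∘ fun l : Fin q =>
      if 2 ≤ (l : ℕ) then FreeNilpotent.gen p q l ^ C l else 1) =
      fun l : Fin q => if 2 ≤ (l : ℕ) then φ (FreeNilpotent.gen p q l) ^ C l else 1 := by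
    funext l
    simp only [Function.comp_apply]
    split
    · rw [map_zpow]
    · rw [map_one]
  rw [hfn]
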